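/- Let n ≥ 2. Then for every real x, det(xI − ℒ(B_n²)) = (x − 6/5)^4 · (x − 8/7)^{2n−2} · det(xI_{n+1} − 2M) · det(xI_{n+1} − 2N). Equivalently, the normalized Laplacian spectrum of B_n² consists of 6/5 with multiplicity 4, 8/7 with multiplicity 2n−2, together with the numbers 2α_i (1 ≤ i ≤ n+1) and 2β_j (1 ≤ j ≤ n+1), where α_1 ≤ … ≤ α_{n+1} are the eigenvalues of M and β_1 ≤ … ≤ β_{n+1} are the eigenvalues of N. -/

import Mathlib

/-!
`B_n` is the ladder `P_{n+1} □ K₂`. Both `K₂` factors, the rungs of the ladder and the two layers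
of the strong prism, give the matrices involved the block shape `!![X, Y; Y, X]`, whose determinant
is `det (X + Y) * det (X - Y)`. For the strong prism of any graph `G`, with `W = (2D + I)^{-1/2}`,
`xI - ℒ` has blocks `X = (x - 1)I + W A W` and `Y = W (A + I) W`. Here `X - Y = (x - 1)I - W²` is
diagonal and gives the factors `x - 1 - 1/(2d + 1)`, i.e. `x - 6/5` and `x - 8/7` for the degrees
2 and 3 of `B_n`. Splitting `X + Y` once more along the rungs leaves two tridiagonal matrices on
the path, `(x - 1)I + W (2A + 3I) W = xI - 2M` and `(x - 1)I + W (2A - I) W = xI - 2N`.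
-/

/-- The tridiagonal matrix `M` (of size `(n+1) × (n+1)`). -/
noncomputable def Mmat (n : ℕ) : Matrix (Fin (n+1)) (Fin (n+1)) ℝ :=
  Matrix.of fun i j =>
    if i = j then (if i.val = 0 ∨ i.val = n then 1/5 else 2/7)
    else if i.val + 1 = j.val ∨ j.val + 1 = i.val then
      (if min i.val j.val = 0 ∨ max i.val j.val = n then -(1/Real.sqrt 35) else -(1/7))
    else 0

/-- The tridiagonal matrix `N` (of size `(n+1) × (n+1)`). -/
noncomputable def Nmat (n : ℕ) : Matrix (Fin (n+1)) (Fin (n+1)) ℝ :=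
  Matrix.of fun i j =>
    if i = j then (if i.val = 0 ∨ i.val = n then 3/5 else 4/7)
    else if i.val + 1 = j.val ∨ j.val + 1 = i.val then
      (if min i.val j.val = 0 ∨ max i.val j.val = n then -(1/Real.sqrt 35) else -(1/7))
    else 0

/-- The linear polyomino chain `B_n`, with vertices `u_i = (i, false)` and
`v_i = (i, true)` for `0 ≤ i ≤ n`, edges `u_i u_{i+1}`, `v_i v_{i+1}` and `u_i v_i`. -/
def Bgraph (n : ℕ) : SimpleGraph (Fin (n+1) × Bool) :=
  SimpleGraph.fromRel (fun x y => (x.2 = y.2 ∧ x.1.val + 1 = y.1.val) ∨ (x.1 = y.1))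

/-- The strong prism `G ⊠ K₂`: distinct `(x, s)` and `(y, t)` are adjacent
iff `x = y` or `x` is adjacent to `y` in `G`. -/
def strongPrism {V : Type*} (G : SimpleGraph V) : SimpleGraph (V × Bool) :=
  SimpleGraph.fromRel (fun x y => x.1 = y.1 ∨ G.Adj x.1 y.1)

open scoped Classical in
/-- The normalized Laplacian `ℒ(G) = I − D^{−1/2} A D^{−1/2}` of a graph, given
entrywise: `1` on the diagonal, `−1/√(dᵢ dⱼ)` at adjacent pairs, `0` otherwise. -/
noncomputable def normLap {V : Type*} [Fintype V] (G : SimpleGraph V) : Matrix V V ℝ :=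
  Matrix.of fun i j =>
    if i = j then 1
    else if G.Adj i j then -(1 / Real.sqrt ((G.degree i : ℝ) * (G.degree j))) else 0

open Matrix SimpleGraph

namespace Matrix

variable {V R : Type*}

/-- The block matrix `!![A, B; B, A]`, with `Bool` indexing the blocks. -/
def boolBlock (A B : Matrix V V R) : Matrix (V × Bool) (V × Bool) R :=
  of fun p q => if p.2 = q.2 then A p.1 q.1 else B p.1 q.1

@[simp]
theorem boolBlock_apply (A B : Matrix V V R) (a b : V) (s t : Bool) :
    boolBlock A B (a, s) (b, t) = if s = t then A a b else B a b := rfl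

theorem boolBlock_add [Add R] (A B C D : Matrix V V R) :
    boolBlock A B + boolBlock C D = boolBlock (A + C) (B + D) := by
  ext ⟨a, s⟩ ⟨b, t⟩; by_cases s = t <;> simp [*]

theorem boolBlock_sub [Sub R] (A B C D : Matrix V V R) :
    boolBlock A B - boolBlock C D = boolBlock (A - C) (B - D) := by
  ext ⟨a, s⟩ ⟨b, t⟩; by_cases s = t <;> simp [*]

theorem smul_boolBlock {S : Type*} [SMul S R] (c : S) (A B : Matrix V V R) :
    c • boolBlock A B = boolBlock (c • A) (c • B) := by
  ext ⟨a, s⟩ ⟨b, t⟩; by_cases s = t <;> simp [*]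

theorem boolBlock_mul [Fintype V] [NonUnitalNonAssocSemiring R] (A B C D : Matrix V V R) :
    boolBlock A B * boolBlock C D = boolBlock (A * C + B * D) (A * D + B * C) := by
  ext ⟨a, s⟩ ⟨b, t⟩
  simp only [mul_apply, Fintype.sum_prod_type, Fintype.sum_bool, boolBlock_apply, add_apply]
  cases s <;> cases t <;> simp [Finset.sum_add_distrib, add_comm]

theorem one_eq_boolBlock [DecidableEq V] [Zero R] [One R] :
    (1 : Matrix (V × Bool) (V × Bool) R) = boolBlock 1 0 := by
  ext ⟨a, s⟩ ⟨b, t⟩; by_cases s = t <;> simp [one_apply, *]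

theorem diagonal_comp_fst_eq_boolBlock [DecidableEq V] [Zero R] (d : V → R) :
    diagonal (fun p : V × Bool => d p.1) = boolBlock (diagonal d) 0 := by
  ext ⟨a, s⟩ ⟨b, t⟩; by_cases s = t <;> simp [diagonal_apply, *]

theorem det_fromBlocks_eq_det_add_mul_det_sub [Fintype V] [DecidableEq V] [CommRing R]
    (A B : Matrix V V R) : (fromBlocks A B B A).det = (A + B).det * (A - B).det := by
  have h : fromBlocks 1 1 0 1 * fromBlocks A B B A * fromBlocks 1 (-1) 0 1
      = fromBlocks (A + B) 0 B (A - B) := by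
    simp only [fromBlocks_multiply]
    congr 1 <;> noncomm_ring
  simpa [det_mul, det_fromBlocks_zero₁₂] using congrArg det h

theorem det_boolBlock [Fintype V] [DecidableEq V] [CommRing R] (A B : Matrix V V R) :
    (boolBlock A B).det = (A + B).det * (A - B).det := by
  let e : V ⊕ V ≃ V × Bool := (Equiv.boolProdEquivSum V).symm.trans (Equiv.prodComm Bool V)
  rw [← det_fromBlocks_eq_det_add_mul_det_sub, ← det_submatrix_equiv_self e]
  congr 1
  ext (a | a) (b | b) <;> simp [e]

end Matrix

namespace SimpleGraph

variable {V : Type*}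

theorem strongPrism_adj (G : SimpleGraph V) {p q : V × Bool} :
    (strongPrism G).Adj p q ↔ p ≠ q ∧ (p.1 = q.1 ∨ G.Adj p.1 q.1) := by
  simp only [strongPrism, fromRel_adj, eq_comm (a := q.1), G.adj_comm q.1, or_self]

theorem neighborFinset_strongPrism [Fintype V] [DecidableEq V] (G : SimpleGraph V)
    [DecidableRel G.Adj] (v : V) (s : Bool) [Fintype ((strongPrism G).neighborSet (v, s))] :
    (strongPrism G).neighborFinset (v, s) =
      insert (v, !s) (G.neighborFinset v ×ˢ Finset.univ) := by
  ext ⟨w, t⟩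
  simp only [mem_neighborFinset, strongPrism_adj, Finset.mem_insert, Finset.mem_product,
    Finset.mem_univ, and_true, Prod.mk.injEq, ne_eq]
  constructor
  · rintro ⟨hne, rfl | hadj⟩
    · exact Or.inl ⟨rfl, by cases s <;> cases t <;> simp_all⟩
    · exact Or.inr hadj
  · rintro (⟨rfl, rfl⟩ | hadj)
    · simp
    · exact ⟨fun h => G.ne_of_adj hadj h.1, Or.inr hadj⟩

theorem degree_strongPrism [Fintype V] [DecidableEq V] (G : SimpleGraph V) [DecidableRel G.Adj]
    (p : V × Bool) [Fintype ((strongPrism G).neighborSet p)] :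
    (strongPrism G).degree p = 2 * G.degree p.1 + 1 := by
  obtain ⟨v, s⟩ := p
  rw [← card_neighborFinset_eq_degree, neighborFinset_strongPrism,
    Finset.card_insert_of_notMem (by simp), Finset.card_product, card_neighborFinset_eq_degree]
  simp [mul_comm]

theorem degree_boxProd_top [Fintype V] [DecidableEq V] (G : SimpleGraph V) [DecidableRel G.Adj]
    (p : V × Bool) [Fintype ((G □ ⊤).neighborSet p)] :
    (G □ (⊤ : SimpleGraph Bool)).degree p = G.degree p.1 + 1 := by
  rw [degree_boxProd]
  simp

theorem adjMatrix_strongPrism [DecidableEq V] (R : Type*) [AddMonoidWithOne R]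
    (G : SimpleGraph V) [DecidableRel G.Adj] [DecidableRel (strongPrism G).Adj] :
    (strongPrism G).adjMatrix R = boolBlock (G.adjMatrix R) (G.adjMatrix R + 1) := by
  ext ⟨a, s⟩ ⟨b, t⟩
  by_cases hst : s = t <;> by_cases hab : a = b <;>
    simp [adjMatrix_apply, strongPrism_adj, one_apply, *]

theorem adjMatrix_boxProd_top [DecidableEq V] (R : Type*) [Zero R] [One R] (G : SimpleGraph V)
    [DecidableRel G.Adj] [DecidableRel (G □ (⊤ : SimpleGraph Bool)).Adj] :
    (G □ (⊤ : SimpleGraph Bool)).adjMatrix R = boolBlock (G.adjMatrix R) 1 := by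
  ext ⟨a, s⟩ ⟨b, t⟩
  by_cases hst : s = t <;> by_cases hab : a = b <;> simp [adjMatrix_apply, one_apply, *]

end SimpleGraph

theorem normLap_eq_one_sub {V : Type*} [Fintype V] [DecidableEq V] (G : SimpleGraph V)
    [DecidableRel G.Adj] :
    normLap G = 1 - diagonal (fun v => (√(G.degree v : ℝ))⁻¹) * G.adjMatrix ℝ *
      diagonal (fun v => (√(G.degree v : ℝ))⁻¹) := by
  ext a b
  simp only [normLap, of_apply, Matrix.sub_apply, mul_diagonal, diagonal_mul, adjMatrix_apply,
    one_apply]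
  by_cases hab : a = b
  · simp [hab]
  · by_cases hadj : G.Adj a b
    · simp [hab, hadj, Real.sqrt_mul (Nat.cast_nonneg _), mul_comm]
      -- `normLap` counts degrees with the classical `Fintype` instances
      congr!
    · simp [hab, hadj]

theorem det_smul_one_sub_normLap_strongPrism {V : Type*} [Fintype V] [DecidableEq V]
    (G : SimpleGraph V) [DecidableRel G.Adj] (x : ℝ) :
    (x • 1 - normLap (strongPrism G)).det =
      ((x - 1) • 1 + diagonal (fun v => (√(2 * G.degree v + 1 : ℝ))⁻¹) *
        (2 • G.adjMatrix ℝ + 1) * diagonal (fun v => (√(2 * G.degree v + 1 : ℝ))⁻¹)).det *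
      ∏ v, (x - 1 - (2 * G.degree v + 1 : ℝ)⁻¹) := by
  classical
  have hdeg : (fun p => (√((strongPrism G).degree p : ℝ))⁻¹)
      = fun p : V × Bool => (√(2 * G.degree p.1 + 1 : ℝ))⁻¹ := by
    funext p; rw [degree_strongPrism]; push_cast; rfl
  rw [normLap_eq_one_sub, hdeg,
    diagonal_comp_fst_eq_boolBlock (fun v => (√(2 * G.degree v + 1 : ℝ))⁻¹),
    adjMatrix_strongPrism, one_eq_boolBlock]
  simp only [boolBlock_mul, boolBlock_sub, smul_boolBlock, det_boolBlock, zero_mul, mul_zero,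
    add_zero, zero_add, smul_zero, zero_sub, sub_neg_eq_add]
  set w : V → ℝ := fun v => (√(2 * G.degree v + 1 : ℝ))⁻¹
  set A := G.adjMatrix ℝ
  have hw : ∀ v, w v * w v = (2 * G.degree v + 1 : ℝ)⁻¹ := fun v => by
    rw [← mul_inv, Real.mul_self_sqrt (by positivity)]
  have hdiag : x • 1 - (1 - diagonal w * A * diagonal w) - diagonal w * (A + 1) * diagonal w
      = diagonal fun v => x - 1 - (2 * G.degree v + 1 : ℝ)⁻¹ := by
    have : x • 1 - (1 - diagonal w * A * diagonal w) - diagonal w * (A + 1) * diagonal w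
        = (x - 1) • 1 - diagonal w * diagonal w := by
      rw [sub_smul, one_smul]; noncomm_ring
    rw [this, diagonal_mul_diagonal, smul_one_eq_diagonal, diagonal_sub]
    simp only [hw]
  rw [hdiag, det_diagonal, sub_smul, one_smul]
  congr 2
  noncomm_ring

theorem det_smul_one_add_conj_adjMatrix_boxProd_top {V R : Type*} [Fintype V] [DecidableEq V]
    [CommRing R] (H : SimpleGraph V) [DecidableRel H.Adj]
    [DecidableRel (H □ (⊤ : SimpleGraph Bool)).Adj] (w : V → R) (y : R) :
    (y • 1 + diagonal (fun p : V × Bool => w p.1) * (2 • (H □ ⊤).adjMatrix R + 1) *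
        diagonal (fun p : V × Bool => w p.1)).det =
      (y • 1 + diagonal w * (2 • H.adjMatrix R + 3) * diagonal w).det *
      (y • 1 + diagonal w * (2 • H.adjMatrix R - 1) * diagonal w).det := by
  rw [diagonal_comp_fst_eq_boolBlock, adjMatrix_boxProd_top, one_eq_boolBlock]
  simp only [boolBlock_mul, boolBlock_add, smul_boolBlock, det_boolBlock, zero_mul, mul_zero,
    add_zero, zero_add, smul_zero]
  congr 2 <;> noncomm_ring

theorem det_smul_one_sub_normLap_strongPrism_boxProd_top {V : Type*} [Fintype V]
    [DecidableEq V] (H : SimpleGraph V) [DecidableRel H.Adj] (x : ℝ) :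
    (x • 1 - normLap (strongPrism (H □ (⊤ : SimpleGraph Bool)))).det =
      ((x - 1) • 1 + diagonal (fun v => (√(2 * H.degree v + 3 : ℝ))⁻¹) *
        (2 • H.adjMatrix ℝ + 3) * diagonal (fun v => (√(2 * H.degree v + 3 : ℝ))⁻¹)).det *
      ((x - 1) • 1 + diagonal (fun v => (√(2 * H.degree v + 3 : ℝ))⁻¹) *
        (2 • H.adjMatrix ℝ - 1) * diagonal (fun v => (√(2 * H.degree v + 3 : ℝ))⁻¹)).det *
      ∏ v, (x - 1 - (2 * H.degree v + 3 : ℝ)⁻¹) ^ 2 := by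
  classical
  have hdeg : ∀ d : ℝ, 2 * (d + 1) + 1 = 2 * d + 3 := fun d => by ring
  rw [det_smul_one_sub_normLap_strongPrism]
  simp only [degree_boxProd_top, Nat.cast_add, Nat.cast_one, hdeg]
  rw [det_smul_one_add_conj_adjMatrix_boxProd_top H (fun v => (√(2 * H.degree v + 3 : ℝ))⁻¹),
    Fintype.prod_prod_type]
  simp only [Fintype.prod_bool, sq]

theorem Bgraph_eq_boxProd (n : ℕ) : Bgraph n = pathGraph (n + 1) □ ⊤ := by
  ext ⟨i, b⟩ ⟨j, c⟩
  simp only [Bgraph, fromRel_adj, boxProd_adj, pathGraph_adj, top_adj, ne_eq, Prod.mk.injEq,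
    Fin.ext_iff]
  cases b <;> cases c <;> simp <;> omega

theorem degree_pathGraph {n : ℕ} (hn : 1 ≤ n) (i : Fin (n + 1))
    [Fintype ((pathGraph (n + 1)).neighborSet i)] :
    (pathGraph (n + 1)).degree i = if i.val = 0 ∨ i.val = n then 1 else 2 := by
  rw [← card_neighborFinset_eq_degree]
  split_ifs with h
  · rw [Finset.card_eq_one]
    rcases h with h | h
    · exact ⟨⟨1, by omega⟩, by ext j; simp [pathGraph_adj, Fin.ext_iff]; omega⟩
    · exact ⟨⟨n - 1, by omega⟩, by ext j; simp [pathGraph_adj, Fin.ext_iff]; omega⟩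
  · rw [Finset.card_eq_two]
    exact ⟨⟨i.val - 1, by omega⟩, ⟨i.val + 1, by omega⟩, by simp [Fin.ext_iff],
      by ext j; simp [pathGraph_adj, Fin.ext_iff]; omega⟩

theorem conj_adjMatrix_pathGraph_apply {n : ℕ} (hn : 2 ≤ n)
    [DecidableRel (pathGraph (n + 1)).Adj] (c : ℝ) (i j : Fin (n + 1)) :
    (diagonal (fun k => (√(2 * (pathGraph (n + 1)).degree k + 3 : ℝ))⁻¹) *
      (2 • (pathGraph (n + 1)).adjMatrix ℝ + c • 1) *
      diagonal (fun k => (√(2 * (pathGraph (n + 1)).degree k + 3 : ℝ))⁻¹) :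
        Matrix (Fin (n + 1)) (Fin (n + 1)) ℝ) i j =
      if i = j then c * (if i.val = 0 ∨ i.val = n then 5⁻¹ else 7⁻¹)
      else if i.val + 1 = j.val ∨ j.val + 1 = i.val then
        2 * (if min i.val j.val = 0 ∨ max i.val j.val = n then (√35)⁻¹ else 7⁻¹)
      else 0 := by
  have hw : ∀ k : Fin (n + 1), (√(2 * (pathGraph (n + 1)).degree k + 3 : ℝ))⁻¹ =
      if k.val = 0 ∨ k.val = n then (√5)⁻¹ else (√7)⁻¹ := fun k => by
    rw [degree_pathGraph (by omega)]; split_ifs <;> norm_num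
  have h5 : (√5 : ℝ)⁻¹ * (√5)⁻¹ = 5⁻¹ := by rw [← mul_inv, Real.mul_self_sqrt (by norm_num)]
  have h7 : (√7 : ℝ)⁻¹ * (√7)⁻¹ = 7⁻¹ := by rw [← mul_inv, Real.mul_self_sqrt (by norm_num)]
  have h35 : (√5 : ℝ)⁻¹ * (√7)⁻¹ = (√35)⁻¹ := by
    rw [← mul_inv, ← Real.sqrt_mul (by norm_num)]; norm_num
  simp only [mul_diagonal, diagonal_mul, Matrix.add_apply, Matrix.smul_apply, adjMatrix_apply,
    one_apply, pathGraph_adj, hw, Fin.ext_iff]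
  simp only [smul_eq_mul, nsmul_eq_mul]
  have := i.isLt
  have := j.isLt
  -- `omega` discards the impossible branches: for `n ≥ 2` no edge joins the two end vertices
  split_ifs <;> first
    | omega
    | linear_combination c * h5 | linear_combination c * h7
    | linear_combination 2 * h35 | linear_combination 2 * h7
    | ring

theorem prod_fin_ite_val_eq_zero_or_eq {M : Type*} [CommMonoid M] {n : ℕ} (hn : 1 ≤ n) (a b : M) :
    ∏ i : Fin (n + 1), (if i.val = 0 ∨ i.val = n then a else b) = a ^ 2 * b ^ (n - 1) := by
  obtain ⟨m, rfl⟩ := Nat.exists_eq_add_of_le' hn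
  have hmid : ∀ i : Fin m, (if i.castSucc.succ.val = 0 ∨ i.castSucc.succ.val = m + 1 then a else b)
      = b := fun i => if_neg (by simp; omega)
  rw [Fin.prod_univ_succ, Fin.prod_univ_castSucc, Fintype.prod_congr _ _ hmid]
  simp only [Fin.val_zero, Fin.val_succ, Fin.val_last, true_or, or_true, if_true,
    Finset.prod_const, Finset.card_univ, Fintype.card_fin, add_tsub_cancel_right]
  rw [mul_comm _ a, ← mul_assoc, sq]

theorem smul_one_add_conj_adjMatrix_pathGraph_eq_Mmat {n : ℕ} (hn : 2 ≤ n)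
    [DecidableRel (pathGraph (n + 1)).Adj] (x : ℝ) :
    (x - 1) • 1 + diagonal (fun k => (√(2 * (pathGraph (n + 1)).degree k + 3 : ℝ))⁻¹) *
      (2 • (pathGraph (n + 1)).adjMatrix ℝ + 3) *
      diagonal (fun k => (√(2 * (pathGraph (n + 1)).degree k + 3 : ℝ))⁻¹) =
      x • 1 - (2 : ℝ) • Mmat n := by
  have h3 : (3 : Matrix (Fin (n + 1)) (Fin (n + 1)) ℝ) = (3 : ℝ) • 1 := by
    rw [smul_one_eq_diagonal, diagonal_ofNat]
  ext i j
  rw [h3, Matrix.add_apply, conj_adjMatrix_pathGraph_apply hn]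
  simp only [Mmat, Matrix.sub_apply, Matrix.smul_apply, one_apply, of_apply, smul_eq_mul]
  split_ifs <;> ring

theorem smul_one_add_conj_adjMatrix_pathGraph_eq_Nmat {n : ℕ} (hn : 2 ≤ n)
    [DecidableRel (pathGraph (n + 1)).Adj] (x : ℝ) :
    (x - 1) • 1 + diagonal (fun k => (√(2 * (pathGraph (n + 1)).degree k + 3 : ℝ))⁻¹) *
      (2 • (pathGraph (n + 1)).adjMatrix ℝ - 1) *
      diagonal (fun k => (√(2 * (pathGraph (n + 1)).degree k + 3 : ℝ))⁻¹) =
      x • 1 - (2 : ℝ) • Nmat n := by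
  rw [sub_eq_add_neg (2 • _), ← neg_one_smul ℝ (1 : Matrix _ _ ℝ)]
  ext i j
  rw [Matrix.add_apply, conj_adjMatrix_pathGraph_apply hn]
  simp only [Nmat, Matrix.sub_apply, Matrix.smul_apply, one_apply, of_apply, smul_eq_mul]
  split_ifs <;> ring

theorem normLap_strongPrism_charpoly_factorization (n : ℕ) (hn : 2 ≤ n) (x : ℝ) :
    (x • (1 : Matrix ((Fin (n+1) × Bool) × Bool) ((Fin (n+1) × Bool) × Bool) ℝ)
        - normLap (strongPrism (Bgraph n))).det
      = (x - 6/5)^4 * (x - 8/7)^(2*n-2)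
        * (x • (1 : Matrix (Fin (n+1)) (Fin (n+1)) ℝ) - (2 : ℝ) • Mmat n).det
        * (x • (1 : Matrix (Fin (n+1)) (Fin (n+1)) ℝ) - (2 : ℝ) • Nmat n).det := by
  classical
  have hprod : ∏ i : Fin (n + 1), (x - 1 - (2 * (pathGraph (n + 1)).degree i + 3 : ℝ)⁻¹) ^ 2 =
      (x - 6/5)^4 * (x - 8/7)^(2*n-2) := by
    have hfactor : ∀ i : Fin (n + 1),
        (x - 1 - (2 * (pathGraph (n + 1)).degree i + 3 : ℝ)⁻¹) ^ 2 =
          if i.val = 0 ∨ i.val = n then (x - 6/5) ^ 2 else (x - 8/7) ^ 2 := fun i => by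
      rw [degree_pathGraph (by omega)]; split_ifs <;> ring
    rw [Fintype.prod_congr _ _ hfactor, prod_fin_ite_val_eq_zero_or_eq (by omega), ← pow_mul,
      ← pow_mul, show 2 * (n - 1) = 2 * n - 2 by omega]
  rw [Bgraph_eq_boxProd, det_smul_one_sub_normLap_strongPrism_boxProd_top,
    smul_one_add_conj_adjMatrix_pathGraph_eq_Mmat hn,
    smul_one_add_conj_adjMatrix_pathGraph_eq_Nmat hn, hprod]
  ring
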